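/- Combining the above: in the lattice Λ = Z^{11} with Euler form χ, there is no class v ∈ Λ with χ(v, v) = 1 such that χ(v, mᵢ) = 0 for all i = 1,...,9, where (m₁,...,m₉) are the classes of O(K), O(K+e₂),...,O(K+e₈), O(K-2e₁). In other words, the numerically semiorthonormal sequence (m₁,...,m₉) cannot be extended by any numerically exceptional class orthogonal to it. -/

import Mathlib

/-- Intersection form of signature (1,8) on Z^9: y·y' = y₀y₀' - y₁y₁' - ... - y₈y₈'. -/
def ip (y y' : Fin 9 → ℤ) : ℤ := y 0 * y' 0 - ∑ i : Fin 8, y i.succ * y' i.succ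

/-- Canonical class K = -3h + e₁ + ... + e₈. -/
def K : Fin 9 → ℤ := ![-3, 1, 1, 1, 1, 1, 1, 1, 1]

/-- e j : the j-th standard basis vector (j = 0 is h, j = 1..8 are the exceptional classes). -/
def e (j : ℕ) : Fin 9 → ℤ := fun k => if (k : ℕ) = j then 1 else 0

/-- The Euler form on the lattice Λ = Z × Z^9 × Z of (rank, c₁, c₁²-2c₂)-vectors. -/
def chi (v w : ℤ × (Fin 9 → ℤ) × ℤ) : ℚ :=
  ((v.1 * w.1 : ℤ) : ℚ)
  - (1/2 : ℚ) * ((v.1 * ip w.2.1 K - w.1 * ip v.2.1 K : ℤ) : ℚ)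
  + (1/2 : ℚ) * ((v.1 * w.2.2 + w.1 * v.2.2 - 2 * ip v.2.1 w.2.1 : ℤ) : ℚ)

/-- Divisor class of the i-th member of the sequence: K, K+e₂, ..., K+e₈, K-2e₁. -/
def Dm (i : Fin 9) : Fin 9 → ℤ :=
  if (i : ℕ) = 0 then K else if (i : ℕ) = 8 then K - (2:ℤ) • e 1 else K + e ((i : ℕ) + 1)

/-- The numerically semiorthonormal sequence (m₁,...,m₉) as rank-one classes. -/
def m (i : Fin 9) : ℤ × (Fin 9 → ℤ) × ℤ := (1, Dm i, ip (Dm i) (Dm i))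

/-- m₁₀ = -h + (3/2)p, encoded as (0, -h, 3). -/
def m10 : ℤ × (Fin 9 → ℤ) × ℤ := (0, -(e 0), 3)

/-- m₁₁ = 2 + 2K + h - 3e₁ - p, encoded as (2, 2K + h - 3e₁, -2). -/
def m11 : ℤ × (Fin 9 → ℤ) × ℤ := (2, (2:ℤ) • K + e 0 - (3:ℤ) • e 1, -2)

/-! A class orthogonal to m₁, …, m₉ is cut out by nine linear equations whose solutions are the
ℤ-span of m₁₀ and m₁₁. On that span χ(sm₁₀ + tm₁₁) = -s² - 4st + 4t² = 8t² - (s + 2t)², which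
is congruent to 0, 4 or 7 modulo 8 and hence never 1. -/

lemma two_mul_chi_rank_one (r z : ℤ) (y D : Fin 9 → ℤ) :
    2 * chi (r, y, z) (1, D, ip D D) =
      ((r * (2 - ip D K + ip D D) + z + ip y K - 2 * ip y D : ℤ) : ℚ) := by
  simp only [chi]; push_cast; ring

lemma chi_self (r z : ℤ) (y : Fin 9 → ℤ) :
    chi (r, y, z) (r, y, z) = ((r ^ 2 + r * z - ip y y : ℤ) : ℚ) := by
  simp only [chi]; push_cast; ring

-- `2 - D·K + D²` is `2χ(O(D))` by Riemann–Roch.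
lemma two_sub_ip_Dm_K_add_ip_Dm_Dm (i : Fin 9) :
    2 - ip (Dm i) K + ip (Dm i) (Dm i) = if i = 0 then 2 else 0 := by
  revert i; decide

lemma m10_eq : m10 = (0, ![-1, 0, 0, 0, 0, 0, 0, 0, 0], 3) := by decide

lemma m11_eq : m11 = (2, ![-5, -1, 2, 2, 2, 2, 2, 2, 2], -2) := by decide

lemma mem_span_m10_m11_of_chi_m_eq_zero {v : ℤ × (Fin 9 → ℤ) × ℤ}
    (h : ∀ i, chi v (m i) = 0) : v ∈ Submodule.span ℤ {m10, m11} := by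
  obtain ⟨r, y, z⟩ := v
  have horth_int (i : Fin 9) :
      r * (if i = 0 then 2 else 0) + z + ip y K - 2 * ip y (Dm i) = 0 := by
    have := two_mul_chi_rank_one r z y (Dm i)
    rw [← m, h, mul_zero, two_sub_ip_Dm_K_add_ip_Dm_Dm] at this
    exact_mod_cast this.symm
  have h0 := horth_int 0
  have h1 := horth_int 1
  have h2 := horth_int 2
  have h3 := horth_int 3
  have h4 := horth_int 4
  have h5 := horth_int 5
  have h6 := horth_int 6
  have h7 := horth_int 7
  have h8 := horth_int 8
  simp [Dm, ip, K, e, Fin.sum_univ_succ] at h0 h1 h2 h3 h4 h5 h6 h7 h8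
  rw [Submodule.mem_span_pair]
  refine ⟨5 * y 1 - y 0, -y 1, ?_⟩
  simp only [m10_eq, m11_eq, Prod.smul_mk, Prod.mk_add_mk, Prod.mk.injEq, smul_eq_mul]
  refine ⟨by linarith, funext fun k => ?_, by linarith⟩
  fin_cases k <;> simp <;> linarith

lemma chi_smul_m10_add_smul_m11 (s t : ℤ) :
    chi (s • m10 + t • m11) (s • m10 + t • m11) = -s ^ 2 - 4 * s * t + 4 * t ^ 2 := by
  simp only [m10_eq, m11_eq, Prod.smul_mk, Prod.mk_add_mk, chi_self]
  simp [ip, Fin.sum_univ_succ]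
  ring

lemma neg_sq_sub_four_mul_add_four_sq_ne_one (s t : ℤ) : -s ^ 2 - 4 * s * t + 4 * t ^ 2 ≠ 1 := by
  intro h
  have hmod := congrArg (fun n : ℤ => (n : ZMod 8)) h
  push_cast at hmod
  have hZMod8 : ∀ a b : ZMod 8, -a ^ 2 - 4 * a * b + 4 * b ^ 2 ≠ 1 := by decide
  exact hZMod8 _ _ hmod

/-- No numerically exceptional class in Λ is numerically semiorthogonal to (m₁,...,m₉). -/
theorem stmt_11 :
    ¬ ∃ v : ℤ × (Fin 9 → ℤ) × ℤ, chi v v = 1 ∧ ∀ i : Fin 9, chi v (m i) = 0 := by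
  rintro ⟨v, hv, horth⟩
  obtain ⟨s, t, rfl⟩ := Submodule.mem_span_pair.mp (mem_span_m10_m11_of_chi_m_eq_zero horth)
  rw [chi_smul_m10_add_smul_m11] at hv
  exact neg_sq_sub_four_mul_add_four_sq_ne_one s t (by exact_mod_cast hv)
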